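/- Let T be an efficient filling (k-regular, using the minimum number u(Γ) of symbols) of a k-core Γ, and let t be the largest symbol appearing in T with residue class j = T[t]. Then the restriction of T to the boxes with symbols < t is an efficient filling of the k-core s_j·Γ (Γ with all removable corners of residue j removed), and u(s_j·Γ) = u(Γ) − 1. -/

import Mathlib

/-- The hook length of a box `c = (r, col)` of a Young diagram. -/
def hookLength (Y : YoungDiagram) (c : ℕ × ℕ) : ℕ :=
  (Y.rowLen c.1 - c.2) + (Y.colLen c.2 - c.1) - 1

/-- A box of a Young diagram is a removable corner if it belongs to the diagram but the
boxes directly below it and directly to its right do not. -/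
def IsRemovableCorner (Y : YoungDiagram) (c : ℕ × ℕ) : Prop :=
  c ∈ Y ∧ (c.1 + 1, c.2) ∉ Y ∧ (c.1, c.2 + 1) ∉ Y

/-!
Encode a Young diagram by its abacus: row `r` is a bead at `λ_r - r`, and the cells of row `r`
with hook length `h` correspond to the gaps at distance `h` below that bead. A diagram is a
`k`-core iff its beads are stable under `x ↦ x - k`; then removing all removable corners of
residue `j`, or adding all addable ones, exchanges the runners `j` and `j + 1` of the abacus,
and a row-by-row count of gaps shows that this changes `u` by exactly one. Hence `s_j` is
invertible on cores and `u` is strictly monotone on cores.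

The cells carrying the largest symbol of a `k`-regular filling are removable corners of a
single residue `j`, so by induction on the number of symbols every filling with `n` symbols
fits in a core `κ` with `u(κ) ≤ n`. For an efficient filling of `Γ` this gives a core `κ`
containing the cells with symbols `< t`, with `u(κ) + 1 ≤ u(Γ)` and `Γ ≤ s_j κ`. Since
`u(s_j κ) ≤ u(κ) + 1`, strict monotonicity forces `Γ = s_j κ`, that is `κ = s_j Γ`, and
`κ` is exactly the set of cells with symbols `< t`.
-/

open Finset

variable {k : ℕ}

theorem Int.mem_of_le_of_modEq {S : Set ℤ} (hS : ∀ x ∈ S, x - k ∈ S) {x y : ℤ}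
    (hx : x ∈ S) (hyx : y ≤ x) (h : y ≡ x [ZMOD k]) : y ∈ S := by
  have hiter : ∀ n : ℕ, x - n * k ∈ S := fun n => by
    induction n with
    | zero => simpa using hx
    | succ n ih => simpa [add_mul, sub_add_eq_sub_sub] using hS _ ih
  obtain ⟨m, hm⟩ := h.dvd
  rcases Nat.eq_zero_or_pos k with rfl | hk
  · simp_all
  · have hm0 : 0 ≤ m := by nlinarith
    convert hiter m.toNat using 1
    rw [Int.toNat_of_nonneg hm0]
    linarith

theorem Int.ModEq.eq_of_sub_lt {a b : ℤ} (h : a ≡ b [ZMOD k]) (h₁ : a - b < k)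
    (h₂ : b - a < k) : a = b :=
  (sub_eq_zero.1 (Int.eq_zero_of_abs_lt_dvd h.dvd (abs_sub_lt_iff.2 ⟨h₂, h₁⟩))).symm

theorem Int.ModEq.not_add_one (hk : 2 ≤ k) {a j : ℤ} (h : a ≡ j [ZMOD k]) :
    ¬ a + 1 ≡ j [ZMOD k] :=
  fun h' => by have := (h.trans h'.symm).eq_of_sub_lt (by omega) (by omega); omega

theorem Finset.card_filter_eq_of_perm {α : Type*} {s : Finset α} {p q : α → Prop}
    [DecidablePred p] [DecidablePred q] (σ : Equiv.Perm α)
    (hσ : ∀ y, σ y ≠ y → y ∈ s) (h : ∀ y ∈ s, p y ↔ q (σ y)) :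
    #(s.filter p) = #(s.filter q) := by
  rw [card_filter, card_filter, ← σ.sum_comp s (fun y => if q y then 1 else 0) hσ]
  exact sum_congr rfl fun y hy => if_congr (h y hy) rfl rfl

namespace YoungDiagram

open scoped Classical

variable {Y Z : YoungDiagram} {j : ℤ}

/-! ### Rows and columns -/

theorem rowLen_eq_of_forall_mem_iff {r n : ℕ} (h : ∀ c, (r, c) ∈ Y ↔ c < n) :
    Y.rowLen r = n := by
  have h' : ∀ c, c < Y.rowLen r ↔ c < n := fun c => mem_iff_lt_rowLen.symm.trans (h c)
  exact le_antisymm (not_lt.1 fun hn => (h' n).1 hn |>.false)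
    (not_lt.1 fun hn => (h' _).2 hn |>.false)

theorem colLen_eq_of_forall_mem_iff {c n : ℕ} (h : ∀ r, (r, c) ∈ Y ↔ r < n) :
    Y.colLen c = n := by
  have h' : ∀ r, r < Y.colLen c ↔ r < n := fun r => mem_iff_lt_colLen.symm.trans (h r)
  exact le_antisymm (not_lt.1 fun hn => (h' n).1 hn |>.false)
    (not_lt.1 fun hn => (h' _).2 hn |>.false)

theorem eq_of_rowLen_eq (h : ∀ r, Y.rowLen r = Z.rowLen r) : Y = Z := by
  ext ⟨r, c⟩
  simp only [mem_cells, mem_iff_lt_rowLen, h]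

theorem colLen_mono (h : Y ≤ Z) (c : ℕ) : Y.colLen c ≤ Z.colLen c :=
  not_lt.1 fun hlt => (mem_iff_lt_colLen.1 (h (mem_iff_lt_colLen.2 hlt))).false

theorem rowLen_eq_zero_of_colLen_le {r : ℕ} (h : Y.colLen 0 ≤ r) : Y.rowLen r = 0 := by
  by_contra h'
  exact (mem_iff_lt_colLen.1 (mem_iff_lt_rowLen.2 (Nat.pos_of_ne_zero h'))).not_ge h

/-! ### The abacus -/

/-- Row `r` of `Y` is the bead at position `λ_r - r` of the abacus of `Y`; the other
positions are its gaps. -/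
def bead (Y : YoungDiagram) (r : ℕ) : ℤ := Y.rowLen r - r

def beads (Y : YoungDiagram) : Set ℤ := Set.range Y.bead

theorem bead_mem_beads (r : ℕ) : Y.bead r ∈ Y.beads := ⟨r, rfl⟩

theorem bead_add_le (r d : ℕ) : Y.bead (r + d) + d ≤ Y.bead r := by
  have := Y.rowLen_anti r (r + d) (by omega)
  simp only [bead]
  omega

theorem strictAnti_bead : StrictAnti Y.bead :=
  strictAnti_nat_of_succ_lt fun r => by have := Y.bead_add_le r 1; push_cast at this; omega

theorem eq_of_bead_eq (h : ∀ r, Y.bead r = Z.bead r) : Y = Z :=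
  eq_of_rowLen_eq fun r => by have := h r; simp only [bead] at this; omega

theorem eq_of_beads_eq (h : Y.beads = Z.beads) : Y = Z := by
  have hmono : ∀ W : YoungDiagram, StrictMono (OrderDual.toDual ∘ W.bead) :=
    fun W => W.strictAnti_bead.dual_right
  have hfun := ((hmono Y).range_inj (hmono Z)).1
    (by rw [Set.range_comp, Set.range_comp]; exact congrArg _ h)
  refine eq_of_rowLen_eq fun r => ?_
  have := congrFun hfun r
  simp only [Function.comp_apply, OrderDual.toDual_inj, bead] at this
  omega

theorem sub_one_mem_beads_iff (r : ℕ) :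
    Y.bead r - 1 ∈ Y.beads ↔ Y.rowLen (r + 1) = Y.rowLen r := by
  refine ⟨fun ⟨s, hs⟩ => ?_, fun h => ⟨r + 1, by simp only [bead, h]; push_cast; ring⟩⟩
  have hrs : r < s := Y.strictAnti_bead.lt_iff_gt.1 (by omega)
  have hs' : ¬ r + 1 < s := fun h' => by
    have := Y.strictAnti_bead h'
    have := Y.bead_add_le r 1
    push_cast at this
    omega
  obtain rfl : s = r + 1 := by omega
  simp only [bead] at hs
  omega

theorem add_one_mem_beads_iff (r : ℕ) :
    Y.bead r + 1 ∈ Y.beads ↔ 0 < r ∧ Y.rowLen (r - 1) = Y.rowLen r := by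
  refine ⟨fun ⟨s, hs⟩ => ?_, fun ⟨hr, h⟩ => ⟨r - 1, by simp only [bead, h]; omega⟩⟩
  have hsr : s < r := Y.strictAnti_bead.lt_iff_gt.1 (by omega)
  have hs' : ¬ s < r - 1 := fun h' => by
    have := Y.strictAnti_bead h'
    have := Y.bead_add_le (r - 1) 1
    rw [Nat.sub_add_cancel (by omega)] at this
    push_cast at this
    omega
  obtain rfl : s = r - 1 := by omega
  simp only [bead] at hs
  omega

/-- Column `c` of `Y` is the gap at `c + 1 - λ'_c`: the hook of a cell `(r, c)` runs from this gap
up to the bead of row `r`. -/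
def colGap (Y : YoungDiagram) (c : ℕ) : ℤ := c + 1 - Y.colLen c

theorem strictMono_colGap : StrictMono Y.colGap :=
  strictMono_nat_of_lt_succ fun c => by
    have := Y.colLen_anti c (c + 1) (by omega)
    simp only [colGap]
    omega

theorem colGap_notMem_beads (c : ℕ) : Y.colGap c ∉ Y.beads := by
  rintro ⟨s, hs⟩
  simp only [bead, colGap] at hs
  by_cases h : s < Y.colLen c
  · have := mem_iff_lt_rowLen.1 (mem_iff_lt_colLen.2 h)
    omega
  · have : ¬ c < Y.rowLen s := fun h' => h (mem_iff_lt_colLen.1 (mem_iff_lt_rowLen.2 h'))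
    omega

theorem hookLength_eq_bead_sub_colGap {r c : ℕ} (h : (r, c) ∈ Y) :
    (hookLength Y (r, c) : ℤ) = Y.bead r - Y.colGap c := by
  have h₁ := mem_iff_lt_rowLen.1 h
  have h₂ := mem_iff_lt_colLen.1 h
  simp only [hookLength, bead, colGap]
  omega

theorem colGap_lt_bead {r c : ℕ} (h : (r, c) ∈ Y) : Y.colGap c < Y.bead r := by
  have h₁ := mem_iff_lt_rowLen.1 h
  have h₂ := mem_iff_lt_colLen.1 h
  simp only [bead, colGap]
  omega

theorem exists_colGap_eq {x : ℤ} {r : ℕ} (hx : x ∉ Y.beads) (hr : x < Y.bead r) :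
    ∃ c, (r, c) ∈ Y ∧ Y.colGap c = x := by
  have hex : ∃ s, Y.bead s < x := by
    refine ⟨(Y.rowLen 0 - x + 1).toNat, ?_⟩
    have := Y.bead_add_le 0 (Y.rowLen 0 - x + 1).toNat
    simp only [bead, zero_add] at this ⊢
    omega
  -- the column of the gap `x` has length `m`, the number of beads above `x`
  obtain ⟨m, hm, hmin⟩ : ∃ m, Y.bead m < x ∧ ∀ s < m, ¬ Y.bead s < x :=
    ⟨Nat.find hex, Nat.find_spec hex, fun _ => Nat.find_min hex⟩
  have above : ∀ s, s < m ↔ x < Y.bead s := fun s => by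
    refine ⟨fun hs => lt_of_le_of_ne (not_lt.1 (hmin s hs)) fun he => hx ⟨s, he.symm⟩,
      fun hs => not_le.1 fun hms => ?_⟩
    exact hm.not_ge (hs.le.trans (Y.strictAnti_bead.antitone hms))
  have hxm : x + m ≥ 1 := by simp only [bead] at hm; omega
  have rows : ∀ s, (s, (x + m - 1).toNat) ∈ Y ↔ s < m := fun s => by
    rw [mem_iff_lt_rowLen]
    rcases lt_or_ge s m with hs | hs
    · have h₁ := (above (m - 1)).1 (by omega)
      have h₂ := Y.bead_add_le s (m - 1 - s)
      rw [show s + (m - 1 - s) = m - 1 by omega] at h₂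
      simp only [bead] at h₁ h₂
      omega
    · have h₂ := Y.bead_add_le m (s - m)
      rw [show m + (s - m) = s by omega] at h₂
      simp only [bead] at hm h₂
      omega
  refine ⟨(x + m - 1).toNat, mem_iff_lt_colLen.2 ?_, ?_⟩
  · rw [colLen_eq_of_forall_mem_iff rows]
    exact (above r).2 hr
  · rw [colGap, colLen_eq_of_forall_mem_iff rows]
    omega

/-! ### Small hooks and cores -/

/-- The cells counted by `u(Y)`. -/
def smallHooks (k : ℕ) (Y : YoungDiagram) : Finset (ℕ × ℕ) :=
  Y.cells.filter fun c => hookLength Y c < k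

noncomputable def windowGaps (k : ℕ) (Y : YoungDiagram) (b : ℤ) : Finset ℤ :=
  (Ioo (b - k) b).filter (· ∉ Y.beads)

theorem card_filter_smallHooks_fst_eq (k r : ℕ) :
    #((smallHooks k Y).filter (·.1 = r)) = #(windowGaps k Y (Y.bead r)) := by
  refine card_nbij (fun c => Y.colGap c.2) ?_ ?_ ?_
  · rintro ⟨r', c⟩ hc
    simp only [smallHooks, coe_filter, mem_filter, mem_cells, Set.mem_ofPred_eq] at hc
    obtain ⟨⟨hc, hk⟩, rfl⟩ := hc
    have := hookLength_eq_bead_sub_colGap hc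
    simp only [windowGaps, coe_filter, mem_Ioo, Set.mem_ofPred_eq]
    exact ⟨⟨by omega, colGap_lt_bead hc⟩, colGap_notMem_beads c⟩
  · rintro ⟨r₁, c₁⟩ h₁ ⟨r₂, c₂⟩ h₂ he
    simp only [coe_filter, Set.mem_ofPred_eq] at h₁ h₂
    rw [Prod.mk.injEq]
    exact ⟨h₁.2.trans h₂.2.symm, strictMono_colGap.injective he⟩
  · intro x hx
    simp only [windowGaps, coe_filter, mem_Ioo, Set.mem_ofPred_eq] at hx
    obtain ⟨c, hc, rfl⟩ := exists_colGap_eq hx.2 hx.1.2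
    refine ⟨(r, c), ?_, rfl⟩
    have := hookLength_eq_bead_sub_colGap hc
    simp only [smallHooks, coe_filter, mem_filter, mem_cells, Set.mem_ofPred_eq]
    exact ⟨⟨hc, by omega⟩, trivial⟩

theorem card_smallHooks_eq_sum {N : ℕ} (hN : Y.colLen 0 ≤ N) :
    #(smallHooks k Y) = ∑ r ∈ range N, #(windowGaps k Y (Y.bead r)) := by
  rw [card_eq_sum_card_fiberwise (f := Prod.fst) (t := range N)]
  · exact sum_congr rfl fun r _ => card_filter_smallHooks_fst_eq k r
  · rintro ⟨r, c⟩ hc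
    simp only [smallHooks, coe_filter, mem_cells, Set.mem_ofPred_eq] at hc
    have := mem_iff_lt_colLen.1 (Y.up_left_mem le_rfl (Nat.zero_le c) hc.1)
    simp only [coe_range, Set.mem_Iio]
    omega

def IsCore (k : ℕ) (Y : YoungDiagram) : Prop :=
  ∀ c ∈ Y.cells, ¬ k ∣ hookLength Y c

theorem IsCore.sub_mem_beads (hY : IsCore k Y) {x : ℤ} (hx : x ∈ Y.beads) :
    x - k ∈ Y.beads := by
  rcases Nat.eq_zero_or_pos k with rfl | hk
  · simpa using hx
  by_contra hgap
  obtain ⟨r, rfl⟩ := hx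
  obtain ⟨c, hc, hcx⟩ := exists_colGap_eq (r := r) hgap (by omega)
  have := hookLength_eq_bead_sub_colGap hc
  exact hY _ ((mem_cells _).2 hc) ⟨1, by omega⟩

theorem isCore_of_sub_mem_beads (h : ∀ x ∈ Y.beads, x - k ∈ Y.beads) : IsCore k Y := by
  rintro ⟨r, c⟩ hc ⟨m, hm⟩
  rw [mem_cells] at hc
  have := hookLength_eq_bead_sub_colGap hc
  refine colGap_notMem_beads c (Int.mem_of_le_of_modEq h (bead_mem_beads r)
    (colGap_lt_bead hc).le (Int.modEq_of_dvd ⟨m, ?_⟩))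
  omega

theorem IsCore.mem_beads_of_le_of_modEq (hY : IsCore k Y) {x y : ℤ} (hx : x ∈ Y.beads)
    (hyx : y ≤ x) (h : y ≡ x [ZMOD k]) : y ∈ Y.beads :=
  Int.mem_of_le_of_modEq (fun _ => hY.sub_mem_beads) hx hyx h

theorem IsCore.two_le (hY : IsCore k Y) (h : (smallHooks k Y).Nonempty) : 2 ≤ k := by
  obtain ⟨c, hc⟩ := h
  simp only [smallHooks, mem_filter] at hc
  by_contra hk
  interval_cases k
  · omega
  · exact hY c hc.1 (one_dvd _)

/-! ### Removing and adding corners -/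

def content (c : ℕ × ℕ) : ℤ := c.2 - c.1

def IsAddableCorner (Y : YoungDiagram) (c : ℕ × ℕ) : Prop :=
  c ∉ Y ∧ (c.1 = 0 ∨ (c.1 - 1, c.2) ∈ Y) ∧ (c.2 = 0 ∨ (c.1, c.2 - 1) ∈ Y)

theorem isRemovableCorner_iff {r c : ℕ} :
    IsRemovableCorner Y (r, c) ↔ c + 1 = Y.rowLen r ∧ Y.rowLen (r + 1) < Y.rowLen r := by
  simp only [IsRemovableCorner, mem_iff_lt_rowLen]
  omega

theorem isAddableCorner_iff {r c : ℕ} :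
    IsAddableCorner Y (r, c) ↔ c = Y.rowLen r ∧ (r = 0 ∨ Y.rowLen r < Y.rowLen (r - 1)) := by
  simp only [IsAddableCorner, mem_iff_lt_rowLen]
  omega

noncomputable def removeCorners (Y : YoungDiagram) (p : ℕ × ℕ → Prop) : YoungDiagram where
  cells := Y.cells.filter fun c => ¬ (IsRemovableCorner Y c ∧ p c)
  isLowerSet := by
    rintro ⟨a₁, a₂⟩ ⟨b₁, b₂⟩ ⟨h₁, h₂⟩ ha
    simp only [coe_filter, mem_cells, Set.mem_ofPred_eq] at ha ⊢
    refine ⟨Y.up_left_mem h₁ h₂ ha.1, fun ⟨⟨_, hb₁, hb₂⟩, hp⟩ => ?_⟩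
    simp only at h₁ h₂ hb₁ hb₂
    rcases h₁.lt_or_eq with h₁ | rfl
    · exact hb₁ (Y.up_left_mem h₁ h₂ ha.1)
    rcases h₂.lt_or_eq with h₂ | rfl
    · exact hb₂ (Y.up_left_mem le_rfl h₂ ha.1)
    exact ha.2 ⟨⟨ha.1, hb₁, hb₂⟩, hp⟩

theorem mem_removeCorners {p : ℕ × ℕ → Prop} {c : ℕ × ℕ} :
    c ∈ Y.removeCorners p ↔ c ∈ Y ∧ ¬ (IsRemovableCorner Y c ∧ p c) := by
  simp [removeCorners, ← mem_cells]

theorem removeCorners_le (p : ℕ × ℕ → Prop) : Y.removeCorners p ≤ Y :=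
  fun _ hc => (mem_removeCorners.1 hc).1

theorem removeCorners_mono (h : Y ≤ Z) (p : ℕ × ℕ → Prop) :
    Y.removeCorners p ≤ Z.removeCorners p := by
  intro c hc
  rw [mem_removeCorners] at hc ⊢
  exact ⟨h hc.1, fun ⟨⟨_, h₁, h₂⟩, hp⟩ =>
    hc.2 ⟨⟨hc.1, fun h' => h₁ (h h'), fun h' => h₂ (h h')⟩, hp⟩⟩

theorem removeCorners_le_removeCorners {p q : ℕ × ℕ → Prop}
    (hpq : ∀ c, IsRemovableCorner Y c → p c → q c) :
    Y.removeCorners q ≤ Y.removeCorners p := by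
  intro c hc
  rw [mem_removeCorners] at hc ⊢
  exact ⟨hc.1, fun ⟨h, hp⟩ => hc.2 ⟨h, hpq c h hp⟩⟩

theorem rowLen_removeCorners (p : ℕ × ℕ → Prop) (r : ℕ) :
    (Y.removeCorners p).rowLen r =
      if Y.rowLen (r + 1) < Y.rowLen r ∧ p (r, Y.rowLen r - 1) then Y.rowLen r - 1
      else Y.rowLen r := by
  refine rowLen_eq_of_forall_mem_iff fun c => ?_
  rw [mem_removeCorners, isRemovableCorner_iff, mem_iff_lt_rowLen]
  by_cases hc : c + 1 = Y.rowLen r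
  · obtain rfl : c = Y.rowLen r - 1 := by omega
    split_ifs <;> simp_all
  · split_ifs <;> simp only [hc, false_and, not_false_eq_true, and_true]; omega

noncomputable def addableCells (Y : YoungDiagram) : Finset (ℕ × ℕ) :=
  ((range (Y.colLen 0 + 1)).image fun r => (r, Y.rowLen r)).filter (IsAddableCorner Y)

theorem mem_addableCells {c : ℕ × ℕ} : c ∈ Y.addableCells ↔ IsAddableCorner Y c := by
  refine ⟨fun h => (mem_filter.1 h).2, fun h => mem_filter.2 ⟨?_, h⟩⟩
  obtain ⟨r, c⟩ := c
  obtain ⟨rfl, hr⟩ := isAddableCorner_iff.1 h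
  refine mem_image.2 ⟨r, mem_range.2 ?_, rfl⟩
  rcases hr with rfl | hr
  · omega
  · have := mem_iff_lt_colLen.1 (mem_iff_lt_rowLen.2 (Nat.zero_lt_of_lt hr))
    omega

noncomputable def addCorners (Y : YoungDiagram) (p : ℕ × ℕ → Prop) : YoungDiagram where
  cells := Y.cells ∪ Y.addableCells.filter p
  isLowerSet := by
    rintro ⟨a₁, a₂⟩ ⟨b₁, b₂⟩ ⟨h₁, h₂⟩ ha
    simp only [coe_union, coe_filter, mem_addableCells, Set.mem_union, mem_coe, mem_cells,
      Set.mem_ofPred_eq] at ha ⊢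
    simp only at h₁ h₂
    rcases ha with ha | ⟨⟨ha, ha₁, ha₂⟩, hp⟩
    · exact Or.inl (Y.up_left_mem h₁ h₂ ha)
    rcases h₁.lt_or_eq with h₁ | rfl
    · exact Or.inl (Y.up_left_mem (Nat.le_sub_one_of_lt h₁) h₂ (ha₁.resolve_left (by omega)))
    rcases h₂.lt_or_eq with h₂ | rfl
    · exact Or.inl
        (Y.up_left_mem le_rfl (Nat.le_sub_one_of_lt h₂) (ha₂.resolve_left (by omega)))
    exact Or.inr ⟨⟨ha, ha₁, ha₂⟩, hp⟩

theorem mem_addCorners {p : ℕ × ℕ → Prop} {c : ℕ × ℕ} :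
    c ∈ Y.addCorners p ↔ c ∈ Y ∨ (IsAddableCorner Y c ∧ p c) := by
  simp [addCorners, ← mem_cells, mem_addableCells]

theorem rowLen_addCorners (p : ℕ × ℕ → Prop) (r : ℕ) :
    (Y.addCorners p).rowLen r =
      if (r = 0 ∨ Y.rowLen r < Y.rowLen (r - 1)) ∧ p (r, Y.rowLen r) then Y.rowLen r + 1
      else Y.rowLen r := by
  refine rowLen_eq_of_forall_mem_iff fun c => ?_
  rw [mem_addCorners, isAddableCorner_iff, mem_iff_lt_rowLen]
  by_cases hc : c = Y.rowLen r
  · subst hc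
    split_ifs <;> simp_all
  · split_ifs <;> simp only [hc, false_and, or_false]; omega

theorem le_addCorners_of_removeCorners_le {p q : ℕ × ℕ → Prop}
    (hpq : ∀ c, IsRemovableCorner Y c → p c → q c) (h : Y.removeCorners p ≤ Z) :
    Y ≤ Z.addCorners q := by
  rintro ⟨r, c⟩ hc
  rw [mem_addCorners]
  by_cases hrem : IsRemovableCorner Y (r, c) ∧ p (r, c)
  swap
  · exact Or.inl (h (mem_removeCorners.2 ⟨hc, hrem⟩))
  by_cases hZ : (r, c) ∈ Z
  · exact Or.inl hZ
  -- the boxes above and to the left of `(r, c)` are not corners of `Y`, so they survive in `Z`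
  have kept : ∀ c' ∈ Y, (c'.1 + 1, c'.2) = (r, c) ∨ (c'.1, c'.2 + 1) = (r, c) → c' ∈ Z :=
    fun c' hc' hnext => h (mem_removeCorners.2 ⟨hc', fun ⟨⟨_, h₁, h₂⟩, _⟩ =>
      hnext.elim (fun e => h₁ (e ▸ hc)) (fun e => h₂ (e ▸ hc))⟩)
  refine Or.inr ⟨⟨hZ, ?_, ?_⟩, hpq _ hrem.1 hrem.2⟩
  · refine or_iff_not_imp_left.2 fun hr => kept _ (Y.up_left_mem (Nat.sub_le r 1) le_rfl hc) ?_
    left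
    simp only [Prod.mk.injEq, and_true]
    omega
  · refine or_iff_not_imp_left.2 fun hc₀ => kept _ (Y.up_left_mem le_rfl (Nat.sub_le c 1) hc) ?_
    right
    simp only [Prod.mk.injEq, true_and]
    omega

/-! ### The operators `s_j` on beads -/

noncomputable def removeResidue (k : ℕ) (j : ℤ) (Y : YoungDiagram) : YoungDiagram :=
  Y.removeCorners fun c => content c ≡ j [ZMOD k]

noncomputable def addResidue (k : ℕ) (j : ℤ) (Y : YoungDiagram) : YoungDiagram :=
  Y.addCorners fun c => content c ≡ j [ZMOD k]

theorem removeResidue_le : Y.removeResidue k j ≤ Y :=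
  removeCorners_le _

/-- A removable corner of content `x - 1`, seen on the abacus. -/
def IsRemovableBead (k : ℕ) (j : ℤ) (Y : YoungDiagram) (x : ℤ) : Prop :=
  x - 1 ∉ Y.beads ∧ x ∈ Y.beads ∧ x - 1 ≡ j [ZMOD k]

/-- An addable corner of content `x - 1`, seen on the abacus. -/
def IsAddableGap (k : ℕ) (j : ℤ) (Y : YoungDiagram) (x : ℤ) : Prop :=
  x - 1 ∈ Y.beads ∧ x ∉ Y.beads ∧ x - 1 ≡ j [ZMOD k]

theorem rowLen_removeResidue (r : ℕ) :
    (Y.removeResidue k j).rowLen r =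
      if IsRemovableBead k j Y (Y.bead r) then Y.rowLen r - 1 else Y.rowLen r := by
  have hanti := Y.rowLen_anti r (r + 1) (by omega)
  have hcond : Y.rowLen (r + 1) < Y.rowLen r ∧ content (r, Y.rowLen r - 1) ≡ j [ZMOD k] ↔
      IsRemovableBead k j Y (Y.bead r) := by
    rw [IsRemovableBead, sub_one_mem_beads_iff]
    refine ⟨fun ⟨h, hj⟩ => ⟨by omega, bead_mem_beads r, ?_⟩,
      fun ⟨h, _, hj⟩ => ⟨by omega, ?_⟩⟩ <;>
    · convert hj using 2
      simp only [content, bead]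
      omega
  simp only [removeResidue, rowLen_removeCorners, hcond]

theorem bead_removeResidue (r : ℕ) :
    (Y.removeResidue k j).bead r =
      if IsRemovableBead k j Y (Y.bead r) then Y.bead r - 1 else Y.bead r := by
  change ((Y.removeResidue k j).rowLen r : ℤ) - r = _
  rw [rowLen_removeResidue]
  split_ifs with h
  · have := (sub_one_mem_beads_iff r).not.1 h.1
    have := Y.rowLen_anti r (r + 1) (by omega)
    simp only [bead]
    omega
  · rfl

theorem rowLen_addResidue (r : ℕ) :
    (Y.addResidue k j).rowLen r =
      if IsAddableGap k j Y (Y.bead r + 1) then Y.rowLen r + 1 else Y.rowLen r := by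
  have hanti := Y.rowLen_anti (r - 1) r (by omega)
  have hcond :
      (r = 0 ∨ Y.rowLen r < Y.rowLen (r - 1)) ∧ content (r, Y.rowLen r) ≡ j [ZMOD k] ↔
      IsAddableGap k j Y (Y.bead r + 1) := by
    rw [IsAddableGap, add_one_mem_beads_iff, add_sub_cancel_right]
    exact ⟨fun ⟨h, hj⟩ => ⟨bead_mem_beads r, by omega, hj⟩,
      fun ⟨_, h, hj⟩ => ⟨by omega, hj⟩⟩
  simp only [addResidue, rowLen_addCorners, hcond]

theorem bead_addResidue (r : ℕ) :
    (Y.addResidue k j).bead r =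
      if IsAddableGap k j Y (Y.bead r + 1) then Y.bead r + 1 else Y.bead r := by
  change ((Y.addResidue k j).rowLen r : ℤ) - r = _
  rw [rowLen_addResidue]
  split_ifs
  · simp only [bead]
    push_cast
    ring
  · rfl

theorem mem_beads_removeResidue {y : ℤ} :
    y ∈ (Y.removeResidue k j).beads ↔
      (y ∈ Y.beads ∧ ¬ IsRemovableBead k j Y y) ∨ IsRemovableBead k j Y (y + 1) := by
  constructor
  · rintro ⟨r, rfl⟩
    rw [bead_removeResidue]
    split_ifs with h
    · exact Or.inr (by rwa [sub_add_cancel])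
    · exact Or.inl ⟨bead_mem_beads r, h⟩
  · rintro (⟨⟨r, rfl⟩, h⟩ | h)
    · exact ⟨r, by rw [bead_removeResidue, if_neg h]⟩
    · obtain ⟨r, hr⟩ := h.2.1
      exact ⟨r, by rw [bead_removeResidue, hr, if_pos h, add_sub_cancel_right]⟩

theorem mem_beads_addResidue {y : ℤ} :
    y ∈ (Y.addResidue k j).beads ↔
      (y ∈ Y.beads ∧ ¬ IsAddableGap k j Y (y + 1)) ∨ IsAddableGap k j Y y := by
  constructor
  · rintro ⟨r, rfl⟩
    rw [bead_addResidue]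
    split_ifs with h
    · exact Or.inr h
    · exact Or.inl ⟨bead_mem_beads r, h⟩
  · rintro (⟨⟨r, rfl⟩, h⟩ | h)
    · exact ⟨r, by rw [bead_addResidue, if_neg h]⟩
    · obtain ⟨r, hr⟩ := h.1
      exact ⟨r, by rw [bead_addResidue, hr, sub_add_cancel, if_pos h]⟩

theorem removeResidue_eq_self (h : ∀ x, ¬ IsRemovableBead k j Y x) : Y.removeResidue k j = Y :=
  eq_of_bead_eq fun r => by rw [bead_removeResidue, if_neg (h _)]

theorem addResidue_eq_self (h : ∀ x, ¬ IsAddableGap k j Y x) : Y.addResidue k j = Y :=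
  eq_of_bead_eq fun r => by rw [bead_addResidue, if_neg (h _)]

theorem IsCore.not_isAddableGap (hY : IsCore k Y) {x : ℤ} (hx : IsRemovableBead k j Y x)
    (y : ℤ) : ¬ IsAddableGap k j Y y := by
  rintro ⟨hy₁, hy₂, hy₃⟩
  have hmod : y - 1 ≡ x - 1 [ZMOD k] := hy₃.trans hx.2.2.symm
  rcases le_or_gt x y with hxy | hxy
  · exact hx.1 (hY.mem_beads_of_le_of_modEq hy₁ (by omega) hmod.symm)
  · exact hy₂ (hY.mem_beads_of_le_of_modEq hx.2.1 hxy.le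
      (by simpa using hmod.add_right 1))

theorem IsCore.not_isRemovableBead (hY : IsCore k Y) {y : ℤ} (hy : IsAddableGap k j Y y)
    (x : ℤ) : ¬ IsRemovableBead k j Y x :=
  fun hx => hY.not_isAddableGap hx y hy

/-- On the abacus of a `k`-core, `s_j` exchanges the runners `j` and `j + 1` by this involution. -/
def resSwap (k : ℕ) (j x : ℤ) : ℤ :=
  if x - 1 ≡ j [ZMOD k] then x - 1 else if x ≡ j [ZMOD k] then x + 1 else x

theorem resSwap_resSwap (hk : 2 ≤ k) (x : ℤ) : resSwap k j (resSwap k j x) = x := by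
  unfold resSwap
  by_cases h₁ : x - 1 ≡ j [ZMOD k]
  · have h₂ : ¬ x - 1 - 1 ≡ j [ZMOD k] := fun h => h.not_add_one hk (by rwa [sub_add_cancel])
    simp [h₁, h₂]
  by_cases h₂ : x ≡ j [ZMOD k]
  · simp [h₁, h₂]
  · simp [h₁, h₂]

theorem resSwap_sub (x : ℤ) : resSwap k j (x - k) = resSwap k j x - k := by
  simp only [resSwap, show x - k - 1 = x - 1 - k by ring, Int.sub_modulus_modEq_iff]
  split_ifs <;> ring

theorem resSwap_of_sub_one_modEq {x : ℤ} (h : x - 1 ≡ j [ZMOD k]) : resSwap k j x = x - 1 :=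
  if_pos h

theorem resSwap_sub_one_of_sub_one_modEq (hk : 2 ≤ k) {x : ℤ} (h : x - 1 ≡ j [ZMOD k]) :
    resSwap k j (x - 1) = x := by
  rw [← resSwap_of_sub_one_modEq h, resSwap_resSwap hk]

theorem mem_beads_removeResidue_iff_resSwap (hk : 2 ≤ k) (h : ∀ x, ¬ IsAddableGap k j Y x)
    {y : ℤ} :
    y ∈ (Y.removeResidue k j).beads ↔ resSwap k j y ∈ Y.beads := by
  have h₁ := h y
  have h₂ := h (y + 1)
  rw [mem_beads_removeResidue, resSwap]
  simp only [IsRemovableBead, IsAddableGap, add_sub_cancel_right] at h₁ h₂ ⊢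
  split_ifs with hy hy'
  · have := hy.not_add_one hk
    rw [sub_add_cancel] at this
    tauto
  · tauto
  · tauto

theorem mem_beads_addResidue_iff_resSwap (hk : 2 ≤ k) (h : ∀ x, ¬ IsRemovableBead k j Y x)
    {y : ℤ} :
    y ∈ (Y.addResidue k j).beads ↔ resSwap k j y ∈ Y.beads := by
  have h₁ := h y
  have h₂ := h (y + 1)
  rw [mem_beads_addResidue, resSwap]
  simp only [IsRemovableBead, IsAddableGap, add_sub_cancel_right] at h₁ h₂ ⊢
  split_ifs with hy hy'
  · have := hy.not_add_one hk
    rw [sub_add_cancel] at this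
    tauto
  · tauto
  · tauto

theorem isCore_of_mem_beads_iff_resSwap (hY : IsCore k Y)
    (h : ∀ y, y ∈ Z.beads ↔ resSwap k j y ∈ Y.beads) : IsCore k Z :=
  isCore_of_sub_mem_beads fun x hx => by
    rw [h, resSwap_sub] at *
    exact hY.sub_mem_beads hx

theorem IsCore.removeResidue (hk : 2 ≤ k) (hY : IsCore k Y) : IsCore k (Y.removeResidue k j) := by
  by_cases h : ∃ x, IsAddableGap k j Y x
  · obtain ⟨x, hx⟩ := h
    rwa [removeResidue_eq_self (hY.not_isRemovableBead hx)]
  · exact isCore_of_mem_beads_iff_resSwap hY fun _ =>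
      mem_beads_removeResidue_iff_resSwap hk (not_exists.1 h)

theorem IsCore.addResidue (hk : 2 ≤ k) (hY : IsCore k Y) : IsCore k (Y.addResidue k j) := by
  by_cases h : ∃ x, IsRemovableBead k j Y x
  · obtain ⟨x, hx⟩ := h
    rwa [addResidue_eq_self (hY.not_isAddableGap hx)]
  · exact isCore_of_mem_beads_iff_resSwap hY fun _ =>
      mem_beads_addResidue_iff_resSwap hk (not_exists.1 h)

theorem isAddableGap_removeResidue (hk : 2 ≤ k) (hY : IsCore k Y) {x : ℤ}
    (hx : IsRemovableBead k j Y x) : IsAddableGap k j (Y.removeResidue k j) x := by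
  rw [IsAddableGap, mem_beads_removeResidue_iff_resSwap hk (hY.not_isAddableGap hx),
    mem_beads_removeResidue_iff_resSwap hk (hY.not_isAddableGap hx),
    resSwap_sub_one_of_sub_one_modEq hk hx.2.2, resSwap_of_sub_one_modEq hx.2.2]
  exact ⟨hx.2.1, hx.1, hx.2.2⟩

theorem isRemovableBead_addResidue (hk : 2 ≤ k) (hY : IsCore k Y) {x : ℤ}
    (hx : IsAddableGap k j Y x) : IsRemovableBead k j (Y.addResidue k j) x := by
  rw [IsRemovableBead, mem_beads_addResidue_iff_resSwap hk (hY.not_isRemovableBead hx),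
    mem_beads_addResidue_iff_resSwap hk (hY.not_isRemovableBead hx),
    resSwap_sub_one_of_sub_one_modEq hk hx.2.2, resSwap_of_sub_one_modEq hx.2.2]
  exact ⟨hx.2.1, hx.1, hx.2.2⟩

theorem addResidue_removeResidue (hk : 2 ≤ k) (hY : IsCore k Y) {x : ℤ}
    (hx : IsRemovableBead k j Y x) : (Y.removeResidue k j).addResidue k j = Y := by
  refine eq_of_beads_eq (Set.ext fun y => ?_)
  rw [mem_beads_addResidue_iff_resSwap hk
      ((hY.removeResidue hk).not_isRemovableBead (isAddableGap_removeResidue hk hY hx)),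
    mem_beads_removeResidue_iff_resSwap hk (hY.not_isAddableGap hx), resSwap_resSwap hk]

theorem removeResidue_addResidue (hk : 2 ≤ k) (hY : IsCore k Y) {x : ℤ}
    (hx : IsAddableGap k j Y x) : (Y.addResidue k j).removeResidue k j = Y := by
  refine eq_of_beads_eq (Set.ext fun y => ?_)
  rw [mem_beads_removeResidue_iff_resSwap hk
      ((hY.addResidue hk).not_isAddableGap (isRemovableBead_addResidue hk hY hx)),
    mem_beads_addResidue_iff_resSwap hk (hY.not_isRemovableBead hx), resSwap_resSwap hk]

/-! ### Counting small hooks -/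

theorem IsRemovableBead.eq_of_sub_lt {x x' : ℤ} (hx : IsRemovableBead k j Y x)
    (hx' : IsRemovableBead k j Y x') (h₁ : x - x' < k) (h₂ : x' - x < k) : x = x' := by
  have := (hx.2.2.trans hx'.2.2.symm).eq_of_sub_lt (by omega) (by omega)
  omega

theorem IsCore.isRemovableBead_sub (hY : IsCore k Y) {x x' : ℤ} (hx : IsRemovableBead k j Y x)
    (hx' : IsRemovableBead k j Y x') (hlt : x' < x) : IsRemovableBead k j Y (x - k) := by
  have hmod : x' - 1 ≡ x - 1 [ZMOD k] := hx'.2.2.trans hx.2.2.symm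
  have hle : x' ≤ x - k := by
    have hd := hmod.dvd
    rw [show x - 1 - (x' - 1) = x - x' by ring] at hd
    have := Int.le_of_dvd (by omega) hd
    omega
  refine ⟨fun h => hx'.1 (hY.mem_beads_of_le_of_modEq h (by omega) ?_),
    hY.sub_mem_beads hx.2.1, ?_⟩
  · simpa [show x - k - 1 = x - 1 - k by ring] using hmod
  · simpa [show x - k - 1 = x - 1 - k by ring] using hx.2.2

theorem lt_colLen_of_isRemovableBead {r : ℕ} (h : IsRemovableBead k j Y (Y.bead r)) :
    r < Y.colLen 0 :=
  not_le.1 fun hr => h.1 ((sub_one_mem_beads_iff r).2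
    (by rw [rowLen_eq_zero_of_colLen_le hr, rowLen_eq_zero_of_colLen_le (by omega)]))

theorem mem_beads_removeResidue_iff_swap {b x y : ℤ} (hx : IsRemovableBead k j Y x)
    (hxb : x < b) (hxk : b - k < x - 1) (hy : y ∈ Ioo (b - k) b) :
    y ∈ (Y.removeResidue k j).beads ↔ Equiv.swap (x - 1) x y ∈ Y.beads := by
  rw [mem_Ioo] at hy
  have huniq : ∀ z, b - k < z → z ≤ b → IsRemovableBead k j Y z → z = x :=
    fun z h₁ h₂ hz => hz.eq_of_sub_lt hx (by omega) (by omega)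
  rw [mem_beads_removeResidue]
  rcases eq_or_ne y (x - 1) with rfl | h₁
  · simp [hx, hx.2.1]
  rcases eq_or_ne y x with rfl | h₂
  · have : ¬ IsRemovableBead k j Y (y + 1) := fun h => by
      have := huniq _ (by omega) (by omega) h
      omega
    simp [hx, hx.1, this]
  rw [Equiv.swap_apply_of_ne_of_ne h₁ h₂]
  have h₃ : ¬ IsRemovableBead k j Y y := fun h => h₂ (huniq y (by omega) (by omega) h)
  have h₄ : ¬ IsRemovableBead k j Y (y + 1) := fun h => h₁ (by
    have := huniq _ (by omega) (by omega) h
    omega)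
  simp [h₃, h₄]

theorem card_windowGaps_removeResidue_of_not_isRemovableBead (hY : IsCore k Y) {b : ℤ}
    (hb : b ∈ Y.beads) (hnb : ¬ IsRemovableBead k j Y b) :
    #(windowGaps k (Y.removeResidue k j) b) = #(windowGaps k Y b) := by
  unfold windowGaps
  by_cases hx : ∃ x ∈ Ioo (b - k) b, IsRemovableBead k j Y x
  · obtain ⟨x, hxw, hx⟩ := hx
    rw [mem_Ioo] at hxw
    have hxk : b - k < x - 1 :=
      lt_of_le_of_ne (by omega) fun h => hx.1 (h ▸ hY.sub_mem_beads hb)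
    refine card_filter_eq_of_perm (Equiv.swap (x - 1) x) (fun y hy => ?_)
      fun y hy => (mem_beads_removeResidue_iff_swap hx hxw.2 hxk hy).not
    rw [mem_Ioo]
    rcases eq_or_ne y (x - 1) with rfl | h₁
    · omega
    rcases eq_or_ne y x with rfl | h₂
    · omega
    exact absurd (Equiv.swap_apply_of_ne_of_ne h₁ h₂) hy
  · push Not at hx
    refine card_filter_eq_of_perm (Equiv.refl ℤ) (fun y hy => absurd rfl hy) fun y hy => ?_
    rw [mem_Ioo] at hy
    have h₃ : ¬ IsRemovableBead k j Y y := hx y (mem_Ioo.2 hy)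
    have h₄ : ¬ IsRemovableBead k j Y (y + 1) := by
      rcases eq_or_ne (y + 1) b with h | h
      · rwa [h]
      · exact hx _ (mem_Ioo.2 ⟨by omega, by omega⟩)
    simp [mem_beads_removeResidue, h₃, h₄]

theorem card_windowGaps_removeResidue_of_isRemovableBead (hk : 2 ≤ k) (hY : IsCore k Y) {b : ℤ}
    (hb : IsRemovableBead k j Y b) :
    #(windowGaps k (Y.removeResidue k j) (b - 1)) + 1 =
      #(windowGaps k Y b) + if IsRemovableBead k j Y (b - k) then 1 else 0 := by
  have hfar : ∀ z, b - k < z → z < b → ¬ IsRemovableBead k j Y z :=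
    fun z h₁ h₂ hz => by have := hz.eq_of_sub_lt hb (by omega) (by omega); omega
  have hmid : (Ioo (b - k) (b - 1)).filter (· ∉ (Y.removeResidue k j).beads) =
      (Ioo (b - k) (b - 1)).filter (· ∉ Y.beads) := by
    refine filter_congr fun y hy => ?_
    rw [mem_Ioo] at hy
    simp [mem_beads_removeResidue, hfar y (by omega) (by omega), hfar (y + 1) (by omega) (by omega)]
  have hbot : b - k ∉ (Y.removeResidue k j).beads ↔ IsRemovableBead k j Y (b - k) := by
    simp [mem_beads_removeResidue, hY.sub_mem_beads hb.2.1,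
      hfar (b - k + 1) (by omega) (by omega)]
  have hI' : Ioo (b - 1 - k) (b - 1) = insert (b - k) (Ioo (b - k) (b - 1)) := by
    ext; simp only [mem_Ioo, mem_insert]; omega
  have hI : Ioo (b - k) b = insert (b - 1) (Ioo (b - k) (b - 1)) := by
    ext; simp only [mem_Ioo, mem_insert]; omega
  simp only [windowGaps, hI, hI', filter_insert, hmid, hbot, if_pos hb.1]
  rw [card_insert_of_notMem (by simp)]
  split_ifs
  · rw [card_insert_of_notMem (by simp)]
  · rfl

theorem card_windowGaps_removeResidue (hk : 2 ≤ k) (hY : IsCore k Y) (r : ℕ) :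
    #(windowGaps k (Y.removeResidue k j) ((Y.removeResidue k j).bead r)) +
        (if IsRemovableBead k j Y (Y.bead r) then 1 else 0) =
      #(windowGaps k Y (Y.bead r)) +
        if IsRemovableBead k j Y (Y.bead r) ∧ IsRemovableBead k j Y (Y.bead r - k) then 1
        else 0 := by
  rw [bead_removeResidue]
  by_cases h : IsRemovableBead k j Y (Y.bead r)
  · simp only [h, true_and, ↓reduceIte]
    exact card_windowGaps_removeResidue_of_isRemovableBead hk hY h
  · simp only [h, false_and, ↓reduceIte]
    rw [card_windowGaps_removeResidue_of_not_isRemovableBead hY (bead_mem_beads r) h]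

theorem IsCore.card_filter_isRemovableBead_sub_add_one (hk : 0 < k) (hY : IsCore k Y) {x : ℤ}
    (hx : IsRemovableBead k j Y x) :
    #((range (Y.colLen 0)).filter
        fun r => IsRemovableBead k j Y (Y.bead r) ∧ IsRemovableBead k j Y (Y.bead r - k)) + 1 =
      #((range (Y.colLen 0)).filter fun r => IsRemovableBead k j Y (Y.bead r)) := by
  set R := (range (Y.colLen 0)).filter fun r => IsRemovableBead k j Y (Y.bead r)
  have memR : ∀ {r}, r ∈ R ↔ IsRemovableBead k j Y (Y.bead r) := fun {r} => by
    simp only [R, mem_filter, mem_range, and_iff_right_iff_imp]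
    exact lt_colLen_of_isRemovableBead
  have hR : R.Nonempty := by
    obtain ⟨r, rfl⟩ := hx.2.1
    exact ⟨r, memR.2 hx⟩
  have herase : (range (Y.colLen 0)).filter (fun r => IsRemovableBead k j Y (Y.bead r) ∧
      IsRemovableBead k j Y (Y.bead r - k)) = R.erase (R.max' hR) := by
    ext r
    rw [mem_erase, mem_filter, mem_range, memR]
    constructor
    · rintro ⟨-, hr, hrk⟩
      obtain ⟨s, hs⟩ := hrk.2.1
      have hrs : r < s := Y.strictAnti_bead.lt_iff_gt.1 (by omega)
      exact ⟨fun h => (R.le_max' s (memR.2 (hs ▸ hrk))).not_gt (h ▸ hrs), hr⟩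
    · rintro ⟨hne, hr⟩
      have hlt := lt_of_le_of_ne (R.le_max' r (memR.2 hr)) hne
      exact ⟨lt_colLen_of_isRemovableBead hr, hr,
        hY.isRemovableBead_sub hr (memR.1 (R.max'_mem hR)) (Y.strictAnti_bead hlt)⟩
  rw [herase, card_erase_add_one (R.max'_mem hR)]

theorem card_smallHooks_removeResidue (hk : 2 ≤ k) (hY : IsCore k Y) {x : ℤ}
    (hx : IsRemovableBead k j Y x) :
    #(smallHooks k (Y.removeResidue k j)) + 1 = #(smallHooks k Y) := by
  have hsum := sum_congr rfl fun r (_ : r ∈ range (Y.colLen 0)) =>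
    card_windowGaps_removeResidue (j := j) hk hY r
  simp only [sum_add_distrib, sum_boole, Nat.cast_id] at hsum
  rw [card_smallHooks_eq_sum (colLen_mono removeResidue_le 0), card_smallHooks_eq_sum le_rfl]
  have := hY.card_filter_isRemovableBead_sub_add_one (by omega) hx
  omega

theorem card_smallHooks_addResidue (hk : 2 ≤ k) (hY : IsCore k Y) {x : ℤ}
    (hx : IsAddableGap k j Y x) : #(smallHooks k (Y.addResidue k j)) = #(smallHooks k Y) + 1 := by
  have := card_smallHooks_removeResidue hk (hY.addResidue hk) (isRemovableBead_addResidue hk hY hx)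
  rw [removeResidue_addResidue hk hY hx] at this
  exact this.symm

theorem card_smallHooks_addResidue_le (hk : 2 ≤ k) (hY : IsCore k Y) :
    #(smallHooks k (Y.addResidue k j)) ≤ #(smallHooks k Y) + 1 := by
  by_cases hx : ∃ x, IsAddableGap k j Y x
  · obtain ⟨x, hx⟩ := hx
    exact (card_smallHooks_addResidue hk hY hx).le
  · rw [addResidue_eq_self (not_exists.1 hx)]
    omega

theorem exists_isRemovableBead_of_mem {c : ℕ × ℕ} (hc : c ∈ Y) :
    ∃ x, IsRemovableBead k (x - 1) Y x := by
  have hpos := mem_iff_lt_colLen.1 (Y.up_left_mem le_rfl (Nat.zero_le c.2) hc)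
  have hlast := mem_iff_lt_rowLen.1 (mem_iff_lt_colLen.2 (Nat.sub_lt hpos.pos one_pos))
  refine ⟨Y.bead (Y.colLen 0 - 1), fun h => ?_, bead_mem_beads _, Int.ModEq.refl _⟩
  rw [sub_one_mem_beads_iff, rowLen_eq_zero_of_colLen_le (by omega)] at h
  omega

theorem card_smallHooks_lt_of_lt (hk : 2 ≤ k) (hY : IsCore k Y) (hZ : IsCore k Z) (h : Y < Z) :
    #(smallHooks k Y) < #(smallHooks k Z) := by
  induction hn : #Z.cells using Nat.strong_induction_on generalizing Y Z with
  | _ n ih =>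
  obtain ⟨c, hcZ, -⟩ := exists_of_ssubset (cells_ssubset_iff.2 h)
  obtain ⟨x, hx⟩ := exists_isRemovableBead_of_mem (k := k) ((mem_cells _).1 hcZ)
  have hZu := card_smallHooks_removeResidue hk hZ hx
  have hZlt : Z.removeResidue k (x - 1) < Z :=
    lt_of_le_of_ne removeResidue_le fun he => by rw [he] at hZu; omega
  have hcard := hn ▸ card_lt_card (cells_ssubset_iff.2 hZlt)
  have hle : Y.removeResidue k (x - 1) ≤ Z.removeResidue k (x - 1) := removeCorners_mono h.le _
  by_cases hY' : ∃ y, IsRemovableBead k (x - 1) Y y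
  · obtain ⟨y, hy⟩ := hY'
    have hYu := card_smallHooks_removeResidue hk hY hy
    have hne : Y.removeResidue k (x - 1) ≠ Z.removeResidue k (x - 1) := fun he => h.ne <| by
      rw [← addResidue_removeResidue hk hY hy, he, addResidue_removeResidue hk hZ hx]
    have := ih _ hcard (hY.removeResidue hk) (hZ.removeResidue hk) (lt_of_le_of_ne hle hne) rfl
    omega
  · rw [removeResidue_eq_self (not_exists.1 hY')] at hle
    rcases hle.lt_or_eq with hlt | rfl
    · have := ih _ hcard hY (hZ.removeResidue hk) hlt rfl
      omega
    · omega

theorem card_smallHooks_le_of_le (hk : 2 ≤ k) (hY : IsCore k Y) (hZ : IsCore k Z) (h : Y ≤ Z) :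
    #(smallHooks k Y) ≤ #(smallHooks k Z) := by
  rcases h.lt_or_eq with h | rfl
  · exact (card_smallHooks_lt_of_lt hk hY hZ h).le
  · rfl

theorem removeResidue_eq_of_le_addResidue (hk : 2 ≤ k) (hY : IsCore k Y) (hZ : IsCore k Z)
    (hle : Y ≤ Z.addResidue k j) (hu : #(smallHooks k Z) + 1 ≤ #(smallHooks k Y)) :
    Y.removeResidue k j = Z ∧ #(smallHooks k Z) + 1 = #(smallHooks k Y) := by
  by_cases hx : ∃ x, IsAddableGap k j Z x
  · obtain ⟨x, hx⟩ := hx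
    have hadd := card_smallHooks_addResidue hk hZ hx
    obtain rfl : Y = Z.addResidue k j := by
      by_contra hne
      have := card_smallHooks_lt_of_lt hk hY (hZ.addResidue hk) (lt_of_le_of_ne hle hne)
      omega
    exact ⟨removeResidue_addResidue hk hZ hx, hadd.symm⟩
  · rw [addResidue_eq_self (not_exists.1 hx)] at hle
    have := card_smallHooks_le_of_le hk hY hZ hle
    omega

/-! ### Fillings -/

structure IsRegularFilling (k : ℕ) (Y : YoungDiagram) (T : ℕ × ℕ → ℕ) : Prop where
  row_lt : ∀ c ∈ Y.cells, ∀ c' ∈ Y.cells, c.1 = c'.1 → c.2 < c'.2 → T c < T c'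
  col_lt : ∀ c ∈ Y.cells, ∀ c' ∈ Y.cells, c.2 = c'.2 → c.1 < c'.1 → T c < T c'
  content_modEq :
    ∀ c ∈ Y.cells, ∀ c' ∈ Y.cells, T c = T c' → content c ≡ content c' [ZMOD k]

namespace IsRegularFilling

variable {T : ℕ × ℕ → ℕ} {t : ℕ}

theorem mono (hT : IsRegularFilling k Y T) (h : Z ≤ Y) : IsRegularFilling k Z T where
  row_lt c hc c' hc' := hT.row_lt c (cells_subset_iff.2 h hc) c' (cells_subset_iff.2 h hc')
  col_lt c hc c' hc' := hT.col_lt c (cells_subset_iff.2 h hc) c' (cells_subset_iff.2 h hc')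
  content_modEq c hc c' hc' :=
    hT.content_modEq c (cells_subset_iff.2 h hc) c' (cells_subset_iff.2 h hc')

theorem isRemovableCorner_of_forall_le (hT : IsRegularFilling k Y T) {c : ℕ × ℕ} (hc : c ∈ Y)
    (hmax : ∀ c' ∈ Y.cells, T c' ≤ T c) : IsRemovableCorner Y c := by
  refine ⟨hc, fun h => ?_, fun h => ?_⟩
  · rw [← mem_cells] at hc h
    exact (hT.col_lt c hc _ h rfl (Nat.lt_succ_self _)).not_ge (hmax _ h)
  · rw [← mem_cells] at hc h
    exact (hT.row_lt c hc _ h rfl (Nat.lt_succ_self _)).not_ge (hmax _ h)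

theorem mem_removeCorners_eq_iff (hT : IsRegularFilling k Y T) (hmax : ∀ c ∈ Y.cells, T c ≤ t)
    {c : ℕ × ℕ} : c ∈ Y.removeCorners (T · = t) ↔ c ∈ Y ∧ T c ≠ t := by
  rw [mem_removeCorners]
  refine and_congr_right fun hc =>
    ⟨fun h ht => h ⟨hT.isRemovableCorner_of_forall_le hc (ht ▸ hmax), ht⟩,
      fun h ⟨_, ht⟩ => h ht⟩

theorem card_image_removeCorners_add_one (hT : IsRegularFilling k Y T) (ht : t ∈ Y.cells.image T)
    (hmax : ∀ c ∈ Y.cells, T c ≤ t) :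
    #((Y.removeCorners (T · = t)).cells.image T) + 1 = #(Y.cells.image T) := by
  have himage : (Y.removeCorners (T · = t)).cells.image T = (Y.cells.image T).erase t := by
    ext s
    simp only [mem_image, mem_erase, mem_cells, hT.mem_removeCorners_eq_iff hmax]
    constructor
    · rintro ⟨c, ⟨hc, hct⟩, rfl⟩
      exact ⟨hct, c, hc, rfl⟩
    · rintro ⟨hst, c, hc, rfl⟩
      exact ⟨c, ⟨hc, hst⟩, rfl⟩
  rw [himage, card_erase_add_one ht]

end IsRegularFilling

/-- The bound `u ≤ #symbols` that efficient fillings attain. -/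
theorem exists_isCore_le (hk : 2 ≤ k) {T : ℕ × ℕ → ℕ} (hT : IsRegularFilling k Y T) :
    ∃ Z, IsCore k Z ∧ Y ≤ Z ∧ #(smallHooks k Z) ≤ #(Y.cells.image T) := by
  induction hn : #(Y.cells.image T) generalizing Y with
  | zero =>
    have hY : Y.cells = ∅ := by simpa using hn
    exact ⟨Y, fun c hc => absurd hc (by simp [hY]), le_rfl, by simp [smallHooks, hY]⟩
  | succ n ih =>
    have hne : (Y.cells.image T).Nonempty := card_pos.1 (by omega)
    obtain ⟨t, ht, hmax⟩ : ∃ t ∈ Y.cells.image T, ∀ c ∈ Y.cells, T c ≤ t :=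
      ⟨_, max'_mem _ hne, fun c hc => le_max' _ _ (mem_image_of_mem T hc)⟩
    obtain ⟨c₀, hc₀, hc₀t⟩ := mem_image.1 ht
    have hcard := hT.card_image_removeCorners_add_one ht hmax
    obtain ⟨Z, hZ, hle, hZu⟩ := ih (hT.mono (removeCorners_le (T · = t))) (by omega)
    refine ⟨Z.addResidue k (content c₀), hZ.addResidue hk, le_addCorners_of_removeCorners_le
      (fun c hc hct => hT.content_modEq c ((mem_cells _).2 hc.1) c₀ hc₀ (hct.trans hc₀t.symm))
      hle, ?_⟩
    have := card_smallHooks_addResidue_le (j := content c₀) hk hZ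
    omega

end YoungDiagram

open YoungDiagram in
theorem efficient_filling_restriction_general
    (k : ℕ) (Γ : YoungDiagram)
    (hcore : ∀ c ∈ Γ.cells, ¬ (k ∣ hookLength Γ c))
    (T : ℕ × ℕ → ℕ)
    (hrow : ∀ c ∈ Γ.cells, ∀ c' ∈ Γ.cells, c.1 = c'.1 → c.2 < c'.2 → T c < T c')
    (hcol : ∀ c ∈ Γ.cells, ∀ c' ∈ Γ.cells, c.2 = c'.2 → c.1 < c'.1 → T c < T c')
    (hres : ∀ c ∈ Γ.cells, ∀ c' ∈ Γ.cells, T c = T c' →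
      ((c.2 : ℤ) - (c.1 : ℤ)) ≡ ((c'.2 : ℤ) - (c'.1 : ℤ)) [ZMOD (k : ℤ)])
    (heff : (Γ.cells.image T).card = (Γ.cells.filter (fun c => hookLength Γ c < k)).card)
    (t : ℕ) (ht : t ∈ Γ.cells.image T) (htmax : ∀ c ∈ Γ.cells, T c ≤ t)
    (j : ℤ) (hj : ∀ c ∈ Γ.cells, T c = t → ((c.2 : ℤ) - (c.1 : ℤ)) ≡ j [ZMOD (k : ℤ)])
    (Γ' : YoungDiagram)
    (hΓ' : ∀ c : ℕ × ℕ, c ∈ Γ'.cells ↔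
      c ∈ Γ.cells ∧
        ¬ (IsRemovableCorner Γ c ∧ ((c.2 : ℤ) - (c.1 : ℤ)) ≡ j [ZMOD (k : ℤ)])) :
    (∀ c : ℕ × ℕ, c ∈ Γ'.cells ↔ c ∈ Γ.cells ∧ T c ≠ t) ∧
    (∀ c ∈ Γ'.cells, ¬ (k ∣ hookLength Γ' c)) ∧
    (Γ'.cells.filter (fun c => hookLength Γ' c < k)).card + 1
      = (Γ.cells.filter (fun c => hookLength Γ c < k)).card ∧
    (Γ'.cells.image T).card = (Γ'.cells.filter (fun c => hookLength Γ' c < k)).card := by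
  have hT : IsRegularFilling k Γ T := ⟨hrow, hcol, hres⟩
  have heff : #(Γ.cells.image T) = #(smallHooks k Γ) := heff
  have hk : 2 ≤ k := IsCore.two_le hcore (card_pos.1 (heff ▸ card_pos.2 ⟨t, ht⟩))
  have hcorner : ∀ c, IsRemovableCorner Γ c → T c = t → content c ≡ j [ZMOD k] :=
    fun c hc hct => hj c ((mem_cells _).2 hc.1) hct
  have hcard := hT.card_image_removeCorners_add_one ht htmax
  obtain ⟨κ, hκ, hrestr_le, hκu⟩ :=
    exists_isCore_le hk (hT.mono (removeCorners_le (T · = t)))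
  obtain ⟨hΓκ, hu⟩ := removeResidue_eq_of_le_addResidue hk hcore hκ
    (le_addCorners_of_removeCorners_le hcorner hrestr_le) (by omega)
  have hΓ'κ : Γ' = κ := hΓκ ▸ YoungDiagram.ext (Finset.ext fun c => by
    rw [hΓ' c, mem_cells, mem_cells, removeResidue, mem_removeCorners]; rfl)
  have hrestr : Γ.removeCorners (T · = t) = κ :=
    le_antisymm hrestr_le (hΓκ ▸ removeCorners_le_removeCorners hcorner)
  subst hΓ'κ
  refine ⟨fun c => ?_, hκ, hu, ?_⟩
  · rw [← hrestr, mem_cells, hT.mem_removeCorners_eq_iff htmax, mem_cells]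
  · rw [← hrestr] at hu ⊢
    change _ = #(smallHooks k _)
    omega

/-- let `T` be an efficient (`k`-regular, using the minimum number
`u(Γ)` = number of boxes of hook length `< k` of symbols) filling of a `k`-core `Γ`,
let `t` be the largest symbol appearing in `T`, of diagonal residue class `j`.  Then the
boxes with symbols `< t` form exactly the `k`-core `s_j·Γ` (obtained from `Γ` by removing
all removable corners of residue `j`), the restriction of `T` to them is an efficient
filling of `s_j·Γ`, and `u(s_j·Γ) = u(Γ) − 1`. -/
theorem efficient_filling_restriction
    (k : ℕ) (hk : 1 ≤ k) (Γ : YoungDiagram)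
    (hcore : ∀ c ∈ Γ.cells, ¬ (k ∣ hookLength Γ c))
    (T : ℕ × ℕ → ℕ)
    (hrow : ∀ c ∈ Γ.cells, ∀ c' ∈ Γ.cells, c.1 = c'.1 → c.2 < c'.2 → T c < T c')
    (hcol : ∀ c ∈ Γ.cells, ∀ c' ∈ Γ.cells, c.2 = c'.2 → c.1 < c'.1 → T c < T c')
    (hres : ∀ c ∈ Γ.cells, ∀ c' ∈ Γ.cells, T c = T c' →
      ((c.2 : ℤ) - (c.1 : ℤ)) ≡ ((c'.2 : ℤ) - (c'.1 : ℤ)) [ZMOD (k : ℤ)])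
    (heff : (Γ.cells.image T).card = (Γ.cells.filter (fun c => hookLength Γ c < k)).card)
    (t : ℕ) (ht : t ∈ Γ.cells.image T) (htmax : ∀ c ∈ Γ.cells, T c ≤ t)
    (j : ℤ) (hj : ∀ c ∈ Γ.cells, T c = t → ((c.2 : ℤ) - (c.1 : ℤ)) ≡ j [ZMOD (k : ℤ)])
    (Γ' : YoungDiagram)
    (hΓ' : ∀ c : ℕ × ℕ, c ∈ Γ'.cells ↔
      c ∈ Γ.cells ∧
        ¬ (IsRemovableCorner Γ c ∧ ((c.2 : ℤ) - (c.1 : ℤ)) ≡ j [ZMOD (k : ℤ)])) :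
    (∀ c : ℕ × ℕ, c ∈ Γ'.cells ↔ c ∈ Γ.cells ∧ T c ≠ t) ∧
    (∀ c ∈ Γ'.cells, ¬ (k ∣ hookLength Γ' c)) ∧
    (Γ'.cells.filter (fun c => hookLength Γ' c < k)).card + 1
      = (Γ.cells.filter (fun c => hookLength Γ c < k)).card ∧
    (Γ'.cells.image T).card = (Γ'.cells.filter (fun c => hookLength Γ' c < k)).card :=
  efficient_filling_restriction_general k Γ hcore T hrow hcol hres heff t ht htmax j hj Γ' hΓ'
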